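/- arXiv:2110.13439 — 2 statements merged into one kernel-verified Lean document; each statement's English description precedes it below -/
import Mathlib

section
/- For every a ∈ [0, π] and every r ∈ [0, 1], the point e^{ira} on the unit circle and the corresponding point (1−r) + r·e^{ia} on the chord joining 1 to e^{ia} satisfy |e^{ira} − ((1−r) + r·e^{ia})| ≤ 1 − cos(a/2) ≤ a²/8. -/
/-!
Rotating by `e^{-ia/2}` and writing `s = a/2`, `t = 2r - 1 ∈ [-1, 1]`, the arc point becomes
`e^{its}` and the chord point `cos s + i t sin s`. After expanding, the squared distance is at most
`(1 - cos s)²` iff `2 cos s (1 - cos ts) + t² sin² s ≤ 2 t sin(ts) sin s`; for `t ≥ 0` this follows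
from concavity of `sin` (`t sin s ≤ sin ts`), from `1 - cos x ≤ x²/2`, and from
`s² cos s ≤ sin² s` on `[0, π/2]`. The second inequality is `1 - cos x ≤ x²/2` at `x = a/2`.
-/

open Real

namespace Real

lemma sq_mul_cos_le_sin_sq {s : ℝ} (hs₀ : 0 ≤ s) (hs : s ≤ π / 2) :
    s ^ 2 * cos s ≤ sin s ^ 2 := by
  obtain ⟨u, rfl⟩ : ∃ u, s = 2 * u := ⟨s / 2, by ring⟩
  have hc : 0 < cos u := cos_pos_of_mem_Ioo ⟨by linarith [pi_pos], by linarith [pi_pos]⟩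
  have hu : u * cos u ≤ sin u := by
    have := le_tan (x := u) (by linarith) (by linarith [pi_pos])
    rwa [tan_eq_sin_div_cos, le_div_iff₀ hc] at this
  have hsin : 2 * u * cos u ^ 2 ≤ sin (2 * u) := by
    rw [sin_two_mul]
    nlinarith
  have hcos : cos (2 * u) ≤ (cos u ^ 2) ^ 2 := by
    rw [cos_two_mul]
    nlinarith [sq_nonneg (cos u ^ 2 - 1)]
  calc (2 * u) ^ 2 * cos (2 * u) ≤ (2 * u) ^ 2 * (cos u ^ 2) ^ 2 := by gcongr
    _ = (2 * u * cos u ^ 2) ^ 2 := by ring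
    _ ≤ sin (2 * u) ^ 2 := by gcongr

lemma mul_sin_le_sin_mul {s t : ℝ} (hs₀ : 0 ≤ s) (hs : s ≤ π) (ht₀ : 0 ≤ t) (ht₁ : t ≤ 1) :
    t * sin s ≤ sin (t * s) := by
  simpa using strictConcaveOn_sin_Icc.concaveOn.2 ⟨le_rfl, pi_pos.le⟩ ⟨hs₀, hs⟩
    (sub_nonneg.2 ht₁) ht₀ (sub_add_cancel 1 t)

lemma two_mul_cos_mul_one_sub_cos_mul_le {s : ℝ} (t : ℝ) (hs₀ : 0 ≤ s) (hs : s ≤ π / 2) :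
    2 * cos s * (1 - cos (t * s)) ≤ t ^ 2 * sin s ^ 2 := by
  have hc : 0 ≤ cos s := cos_nonneg_of_mem_Icc ⟨by linarith [pi_pos], hs⟩
  calc 2 * cos s * (1 - cos (t * s)) ≤ 2 * cos s * ((t * s) ^ 2 / 2) := by
        gcongr; linarith [one_sub_sq_div_two_le_cos (x := t * s)]
    _ = t ^ 2 * (s ^ 2 * cos s) := by ring
    _ ≤ t ^ 2 * sin s ^ 2 := by gcongr; exact sq_mul_cos_le_sin_sq hs₀ hs

lemma arc_sub_chord_sq_le {s t : ℝ} (hs₀ : 0 ≤ s) (hs : s ≤ π / 2) (ht : |t| ≤ 1) :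
    (cos (t * s) - cos s) ^ 2 + (sin (t * s) - t * sin s) ^ 2 ≤ (1 - cos s) ^ 2 := by
  wlog ht₀ : 0 ≤ t generalizing t
  · have := this (t := -t) (by rwa [abs_neg]) (by linarith)
    rw [neg_mul, cos_neg, sin_neg] at this
    linarith
  have hsin : t * sin s ≤ sin (t * s) :=
    mul_sin_le_sin_mul hs₀ (by linarith [pi_pos]) ht₀ (le_of_abs_le ht)
  have hts : 0 ≤ t * sin s :=
    mul_nonneg ht₀ (sin_nonneg_of_nonneg_of_le_pi hs₀ (by linarith [pi_pos]))
  nlinarith [mul_le_mul_of_nonneg_left hsin hts, two_mul_cos_mul_one_sub_cos_mul_le t hs₀ hs,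
    sin_sq_add_cos_sq (t * s)]

end Real

namespace Complex

lemma norm_exp_mul_I_sub (u x y : ℝ) :
    ‖exp (u * I) - (x + y * I)‖ = √((Real.cos u - x) ^ 2 + (Real.sin u - y) ^ 2) := by
  rw [← norm_add_mul_I, exp_mul_I, ← ofReal_cos, ← ofReal_sin]
  push_cast
  ring_nf

lemma exp_I_mul_sub_chord_eq (a r : ℝ) :
    exp (I * r * a) - (((1 - r : ℝ) : ℂ) + r * exp (I * a)) =
      exp ((a / 2 : ℝ) * I) * (exp (((2 * r - 1) * (a / 2) : ℝ) * I) -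
        ((Real.cos (a / 2) : ℝ) + ((2 * r - 1) * Real.sin (a / 2) : ℝ) * I)) := by
  have harc :
      exp (I * r * a) = exp ((a / 2 : ℝ) * I) * exp (((2 * r - 1) * (a / 2) : ℝ) * I) := by
    rw [← exp_add]; push_cast; ring_nf
  have hchord : exp (I * a) = exp ((a / 2 : ℝ) * I) ^ 2 := by
    rw [← exp_nat_mul]; push_cast; ring_nf
  rw [harc, hchord, exp_mul_I ((a / 2 : ℝ) : ℂ)]
  push_cast
  linear_combination (1 - (r : ℂ)) * sin_sq_add_cos_sq ((a : ℂ) / 2)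
    + (r - 1) * sin ((a : ℂ) / 2) ^ 2 * I_sq

end Complex

theorem chord_vs_arc_distance (a r : ℝ) (ha : a ∈ Set.Icc 0 Real.pi)
    (hr : r ∈ Set.Icc (0 : ℝ) 1) :
    ‖(Complex.exp (Complex.I * (r : ℂ) * (a : ℂ)) -
        (((1 - r : ℝ) : ℂ) + (r : ℂ) * Complex.exp (Complex.I * (a : ℂ))))‖ ≤
      1 - Real.cos (a / 2) ∧
    1 - Real.cos (a / 2) ≤ a ^ 2 / 8 := by
  obtain ⟨ha₀, haπ⟩ := ha
  obtain ⟨hr₀, hr₁⟩ := hr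
  refine ⟨?_, by linarith [one_sub_sq_div_two_le_cos (x := a / 2)]⟩
  rw [Complex.exp_I_mul_sub_chord_eq, norm_mul, Complex.norm_exp_ofReal_mul_I, one_mul,
    Complex.norm_exp_mul_I_sub]
  exact sqrt_le_iff.2 ⟨sub_nonneg.2 (cos_le_one _), arc_sub_chord_sq_le (by linarith)
    (by linarith) (abs_le.2 ⟨by linarith, by linarith⟩)⟩
end

section
/- (Randomized compilation of multiplexed rotations, operator-norm form.) Let c ≥ 1, let θ : Fin c → ℝ be a family of rotation angles, and let b be an integer with b ≥ 1. For each j, let M_j = (1 − r(θ_j,b))·Rz(φ₀(θ_j,b)) + r(θ_j,b)·Rz(φ₀(θ_j,b) + 2^{−b}) be the expectation of the randomized b-bit rounding of the rotation Rz(θ_j). Then the multiplexed rotation U[θ] = Matrix.blockDiagonal (fun j => Rz(θ_j)) satisfies ‖U[θ] − Matrix.blockDiagonal M‖ ≤ π²·2^{−(2b+1)}. Consequently, for any ε with 0 < ε ≤ π²/8, choosing b = ⌈(1/2)·log₂(π²/(2ε))⌉ gives ‖U[θ] − Matrix.blockDiagonal M‖ ≤ ε. -/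
open Real

/-- The ℓ²→ℓ² operator norm of a square complex matrix. -/
noncomputable def opNorm {n : Type*} [Fintype n] [DecidableEq n] (M : Matrix n n ℂ) : ℝ :=
  ‖Matrix.toEuclideanCLM (𝕜 := ℂ) M‖

/-- The single-qubit rotation `Rz(φ) = diag(e^{2πiφ}, e^{−2πiφ})`. -/
noncomputable def Rz (φ : ℝ) : Matrix (Fin 2) (Fin 2) ℂ :=
  Matrix.diagonal ![Complex.exp (2 * Real.pi * Complex.I * (φ : ℂ)),
    Complex.exp (-(2 * Real.pi * Complex.I * (φ : ℂ)))]

/-- The `b`-bit truncation `φ₀(θ,b) = 2^{−b}·⌊2^b·θ⌋`. -/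
noncomputable def phi0 (θ : ℝ) (b : ℕ) : ℝ :=
  (2 : ℝ) ^ (-(b : ℤ)) * (⌊(2 : ℝ) ^ b * θ⌋ : ℝ)

/-- The fractional remainder `r(θ,b) = 2^b·θ − ⌊2^b·θ⌋ ∈ [0,1)`. -/
noncomputable def rfrac (θ : ℝ) (b : ℕ) : ℝ :=
  (2 : ℝ) ^ b * θ - (⌊(2 : ℝ) ^ b * θ⌋ : ℝ)

/-- The expectation `M = (1 − r(θ,b))·Rz(φ₀(θ,b)) + r(θ,b)·Rz(φ₀(θ,b) + 2^{−b})`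
of the randomized `b`-bit rounding of the rotation `Rz(θ)`. -/
noncomputable def expRz (θ : ℝ) (b : ℕ) : Matrix (Fin 2) (Fin 2) ℂ :=
  ((1 - rfrac θ b : ℝ) : ℂ) • Rz (phi0 θ b) +
    ((rfrac θ b : ℝ) : ℂ) • Rz (phi0 θ b + (2 : ℝ) ^ (-(b : ℤ)))

lemma exp_I_sub_one_norm (y : ℝ) : ‖Complex.exp ((y:ℂ) * Complex.I) - 1‖ ≤ |y| := by
  have h : Complex.exp ((y:ℂ) * Complex.I) - 1 =
      ((Real.cos y - 1 : ℝ) : ℂ) + ((Real.sin y : ℝ) : ℂ) * Complex.I := by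
    rw [Complex.exp_mul_I]
    push_cast [← Complex.ofReal_cos, ← Complex.ofReal_sin]
    ring
  rw [h, Complex.norm_add_mul_I]
  rw [show |y| = Real.sqrt (y^2) by rw [Real.sqrt_sq_eq_abs]]
  apply Real.sqrt_le_sqrt
  have h1 := Real.sin_sq_add_cos_sq y
  have h2 := Real.one_sub_sq_div_two_le_cos (x := y)
  nlinarith


lemma key_nonneg (r x : ℝ) (hr0 : 0 ≤ r) (hr1 : r ≤ 1) (hx : 0 ≤ x) :
    ‖Complex.exp ((r:ℂ) * x * Complex.I) -
      (((1 - r : ℝ) : ℂ) + (r : ℂ) * Complex.exp ((x:ℂ) * Complex.I))‖ ≤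
      r * (1 - r) * x ^ 2 / 2 := by
  set g : ℝ → ℂ := fun t => Complex.exp ((r:ℂ) * t * Complex.I) -
      (((1 - r : ℝ) : ℂ) + (r : ℂ) * Complex.exp ((t:ℂ) * Complex.I)) with hg
  set g' : ℝ → ℂ := fun t => (r:ℂ) * Complex.I * Complex.exp ((r:ℂ) * t * Complex.I) -
      (r : ℂ) * (Complex.I * Complex.exp ((t:ℂ) * Complex.I)) with hg'
  have hderiv : ∀ t ∈ Set.uIcc (0:ℝ) x, HasDerivAt g (g' t) t := by
    intro t _
    have h0 : HasDerivAt (fun t : ℝ => (t : ℂ)) 1 t := by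
      exact (Complex.ofRealCLM.hasDerivAt (x := t)).congr_deriv (by simp)
    have h1 : HasDerivAt (fun t : ℝ => (r:ℂ) * t * Complex.I) ((r:ℂ) * Complex.I) t := by
      have := (h0.const_mul ((r:ℂ))).mul_const Complex.I
      simpa using this
    have h2 : HasDerivAt (fun t : ℝ => (t:ℂ) * Complex.I) Complex.I t := by
      simpa using h0.mul_const Complex.I
    have e1 := h1.cexp
    have e2 := (h2.cexp).const_mul ((r:ℂ))
    have := e1.sub ((hasDerivAt_const t (((1 - r : ℝ) : ℂ))).add e2)
    simp [g, g', mul_comm, mul_left_comm, mul_assoc] at this ⊢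
    exact this
  have hcont : Continuous g' := by fun_prop
  have hint : g x - g 0 = ∫ t in (0:ℝ)..x, g' t :=
    (intervalIntegral.integral_eq_sub_of_hasDerivAt hderiv
      (hcont.intervalIntegrable 0 x)).symm
  have hg0 : g 0 = 0 := by simp [g]
  have hbound : ∀ t ∈ Set.Icc (0:ℝ) x, ‖g' t‖ ≤ r * (1 - r) * t := by
    intro t ht
    have hfac : g' t = (r:ℂ) * Complex.exp ((r:ℂ) * t * Complex.I) *
        (Complex.I * (1 - Complex.exp ((((1-r)*t : ℝ):ℂ) * Complex.I))) := by
      rw [hg']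
      rw [show ((((1-r)*t : ℝ):ℂ) * Complex.I) = ((t:ℂ) * Complex.I) - ((r:ℂ) * t * Complex.I) by
        push_cast; ring]
      rw [Complex.exp_sub]
      have hne : Complex.exp ((r:ℂ) * t * Complex.I) ≠ 0 := Complex.exp_ne_zero _
      field_simp
    rw [hfac]
    rw [norm_mul, norm_mul, norm_mul]
    have habs : ‖Complex.exp ((r:ℂ) * t * Complex.I)‖ = 1 := by
      rw [show ((r:ℂ) * t * Complex.I) = (((r*t : ℝ):ℂ) * Complex.I) by push_cast; ring]
      simp [Complex.norm_exp]
    have h1 : ‖(1 : ℂ) - Complex.exp ((((1-r)*t : ℝ):ℂ) * Complex.I)‖ ≤ (1-r)*t := by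
      rw [← norm_neg, neg_sub]
      calc _ ≤ |(1-r)*t| := exp_I_sub_one_norm _
        _ = (1-r)*t := abs_of_nonneg (by nlinarith [ht.1])
    simp only [Complex.norm_real, Complex.norm_I, habs, Real.norm_eq_abs,
      abs_of_nonneg hr0, mul_one, one_mul]
    nlinarith [ht.1]
  have hnorm : ‖g x‖ ≤ ∫ t in (0:ℝ)..x, r * (1-r) * t := by
    calc ‖g x‖ = ‖∫ t in (0:ℝ)..x, g' t‖ := by rw [← hint, hg0, sub_zero]
      _ ≤ ∫ t in (0:ℝ)..x, ‖g' t‖ := intervalIntegral.norm_integral_le_integral_norm hx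
      _ ≤ ∫ t in (0:ℝ)..x, r * (1-r) * t := by
          apply intervalIntegral.integral_mono_on hx
          · exact (hcont.norm).intervalIntegrable 0 x
          · exact (continuous_const.mul continuous_id).intervalIntegrable 0 x
          · exact hbound
  have hval : (∫ t in (0:ℝ)..x, r * (1-r) * t) = r * (1-r) * x^2 / 2 := by
    rw [intervalIntegral.integral_const_mul, integral_id]
    ring
  calc ‖g x‖ ≤ _ := hnorm
    _ = _ := hval


lemma key (r x : ℝ) (hr0 : 0 ≤ r) (hr1 : r ≤ 1) :
    ‖Complex.exp ((r:ℂ) * x * Complex.I) -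
      (((1 - r : ℝ) : ℂ) + (r : ℂ) * Complex.exp ((x:ℂ) * Complex.I))‖ ≤
      r * (1 - r) * x ^ 2 / 2 := by
  rcases le_or_gt 0 x with hx | hx
  · exact key_nonneg r x hr0 hr1 hx
  · have h := key_nonneg r (-x) hr0 hr1 (by linarith)
    have hconj : Complex.exp ((r:ℂ) * x * Complex.I) -
        (((1 - r : ℝ) : ℂ) + (r : ℂ) * Complex.exp ((x:ℂ) * Complex.I)) =
        (starRingEnd ℂ) (Complex.exp ((r:ℂ) * (-x:ℝ) * Complex.I) -
          (((1 - r : ℝ) : ℂ) + (r : ℂ) * Complex.exp (((-x:ℝ):ℂ) * Complex.I))) := by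
      simp only [map_sub, map_add, map_mul, ← Complex.exp_conj, Complex.conj_ofReal,
        Complex.conj_I]
      push_cast
      ring_nf
    rw [hconj, RCLike.norm_conj]
    calc _ ≤ r * (1-r) * (-x)^2/2 := h
      _ = r * (1-r) * x^2/2 := by ring


lemma opNorm_diag_le {n : Type*} [Fintype n] [DecidableEq n] (v : n → ℂ) (C : ℝ)
    (hC : 0 ≤ C) (h : ∀ i, ‖v i‖ ≤ C) :
    ‖Matrix.toEuclideanCLM (𝕜 := ℂ) (Matrix.diagonal v)‖ ≤ C := by
  apply ContinuousLinearMap.opNorm_le_bound _ hC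
  intro x
  set y := WithLp.equiv 2 (n → ℂ) x with hy
  have hx : x = (WithLp.equiv 2 (n → ℂ)).symm y := by simp [hy]
  rw [hx, show Matrix.toEuclideanCLM (𝕜 := ℂ) (Matrix.diagonal v) ((WithLp.equiv 2 (n → ℂ)).symm y) = (WithLp.equiv 2 (n → ℂ)).symm (Matrix.toLin' (Matrix.diagonal v) y) from rfl]
  rw [EuclideanSpace.norm_eq, EuclideanSpace.norm_eq]
  rw [show C * Real.sqrt (∑ i, ‖(WithLp.equiv 2 (n → ℂ)).symm y i‖^2)
      = Real.sqrt (C^2 * ∑ i, ‖(WithLp.equiv 2 (n → ℂ)).symm y i‖^2) by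
    rw [Real.sqrt_mul (by positivity), Real.sqrt_sq hC]]
  apply Real.sqrt_le_sqrt
  rw [Finset.mul_sum]
  apply Finset.sum_le_sum
  intro i _
  have : (WithLp.equiv 2 (n → ℂ)).symm ((Matrix.toLin' (Matrix.diagonal v)) y) i = v i * y i := by
    simp [Matrix.toLin'_apply, Matrix.mulVec_diagonal]
  rw [this]
  have hyi : (WithLp.equiv 2 (n → ℂ)).symm y i = y i := rfl
  rw [hyi, norm_mul, mul_pow]
  have := h i
  have hn : (0:ℝ) ≤ ‖y i‖ := norm_nonneg _
  nlinarith [norm_nonneg (v i), sq_nonneg (‖y i‖), mul_le_mul this this (norm_nonneg (v i)) hC]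


lemma phase_bound (ψ x r : ℝ) (hr0 : 0 ≤ r) (hr1 : r ≤ 1) :
    ‖Complex.exp ((ψ:ℂ) * Complex.I + (r:ℂ) * (x:ℂ) * Complex.I) -
      (((1 - r : ℝ) : ℂ) * Complex.exp ((ψ:ℂ) * Complex.I) +
        (r : ℂ) * Complex.exp ((ψ:ℂ) * Complex.I + (x:ℂ) * Complex.I))‖ ≤
      r * (1 - r) * x ^ 2 / 2 := by
  have hfac : Complex.exp ((ψ:ℂ) * Complex.I + (r:ℂ) * (x:ℂ) * Complex.I) -
      (((1 - r : ℝ) : ℂ) * Complex.exp ((ψ:ℂ) * Complex.I) +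
        (r : ℂ) * Complex.exp ((ψ:ℂ) * Complex.I + (x:ℂ) * Complex.I)) =
      Complex.exp ((ψ:ℂ) * Complex.I) *
        (Complex.exp ((r:ℂ) * x * Complex.I) -
          (((1 - r : ℝ) : ℂ) + (r : ℂ) * Complex.exp ((x:ℂ) * Complex.I))) := by
    rw [Complex.exp_add, Complex.exp_add]
    ring
  rw [hfac, norm_mul]
  have habs : ‖Complex.exp ((ψ:ℂ) * Complex.I)‖ = 1 := by
    simp [Complex.norm_exp]
  rw [habs, one_mul]
  exact key r x hr0 hr1


lemma theta_eq (θ : ℝ) (b : ℕ) : θ = phi0 θ b + rfrac θ b * (2:ℝ) ^ (-(b:ℤ)) := by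
  have h2 : (2:ℝ) ^ (-(b:ℤ)) * (2:ℝ) ^ (b:ℕ) = 1 := by
    rw [← zpow_natCast (2:ℝ) b, ← zpow_add₀ (two_ne_zero)]
    simp
  have : phi0 θ b + rfrac θ b * (2:ℝ) ^ (-(b:ℤ)) = ((2:ℝ) ^ (-(b:ℤ)) * (2:ℝ) ^ (b:ℕ)) * θ := by
    unfold phi0 rfrac; ring
  rw [this, h2, one_mul]


lemma rfrac_mem (θ : ℝ) (b : ℕ) : 0 ≤ rfrac θ b ∧ rfrac θ b ≤ 1 := by
  have h1 := Int.fract_nonneg ((2:ℝ) ^ b * θ)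
  have h2 := Int.fract_lt_one ((2:ℝ) ^ b * θ)
  rw [Int.fract] at h1 h2
  exact ⟨h1, h2.le⟩


lemma entry_bound (θ : ℝ) (b : ℕ) (i : Fin 2) :
    ‖(Rz θ - expRz θ b) i i‖ ≤ Real.pi ^ 2 * (2:ℝ) ^ (-(2 * (b:ℤ) + 1)) := by
  set δ : ℝ := (2:ℝ) ^ (-(b:ℤ)) with hδ
  set r : ℝ := rfrac θ b with hr
  set φ : ℝ := phi0 θ b with hφ
  obtain ⟨hr0, hr1⟩ := rfrac_mem θ b
  rw [← hr] at hr0 hr1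
  have hθ : θ = φ + r * δ := theta_eq θ b
  have hδpos : 0 < δ := by positivity
  have harith : ∀ x : ℝ, x = 2 * Real.pi * δ ∨ x = -(2 * Real.pi * δ) →
      r * (1 - r) * x ^ 2 / 2 ≤ Real.pi ^ 2 * (2:ℝ) ^ (-(2 * (b:ℤ) + 1)) := by
    intro x hx
    have hx2 : x ^ 2 = 4 * Real.pi ^ 2 * δ ^ 2 := by rcases hx with h | h <;> rw [h] <;> ring
    have h2b : (2:ℝ) ^ (-(2 * (b:ℤ) + 1)) = δ * δ / 2 := by
      rw [hδ, show -(2 * (b:ℤ) + 1) = (-(b:ℤ)) + (-(b:ℤ)) + (-1) by ring,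
        zpow_add₀ (two_ne_zero), zpow_add₀ (two_ne_zero)]
      field_simp
    rw [hx2, h2b]
    have hq : r * (1 - r) ≤ 1 / 4 := by nlinarith [sq_nonneg (r - 1/2)]
    nlinarith [sq_nonneg δ, Real.pi_pos, mul_pos (mul_pos Real.pi_pos Real.pi_pos) (mul_pos hδpos hδpos)]
  fin_cases i
  · show ‖(Rz θ - expRz θ b) 0 0‖ ≤ _
    have e0 : (Rz θ - expRz θ b) 0 0 =
        Complex.exp (((2 * Real.pi * φ : ℝ):ℂ) * Complex.I +
            (r:ℂ) * ((2 * Real.pi * δ : ℝ):ℂ) * Complex.I) -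
          (((1 - r : ℝ) : ℂ) * Complex.exp (((2 * Real.pi * φ : ℝ):ℂ) * Complex.I) +
            (r : ℂ) * Complex.exp (((2 * Real.pi * φ : ℝ):ℂ) * Complex.I +
              ((2 * Real.pi * δ : ℝ):ℂ) * Complex.I)) := by
      simp only [Rz, expRz, Matrix.sub_apply, Matrix.add_apply, Matrix.smul_apply,
        Matrix.diagonal_apply_eq, smul_eq_mul, ← hr, ← hφ, ← hδ]
      simp only [Matrix.cons_val_zero]
      congr 2
      · rw [hθ]; push_cast; ring
      · push_cast; ring
      · rw [Complex.exp_add, ← Complex.exp_add]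
        congr 1
        push_cast; ring
    rw [e0]
    exact le_trans (phase_bound _ _ _ hr0 hr1) (harith _ (Or.inl rfl))
  · show ‖(Rz θ - expRz θ b) 1 1‖ ≤ _
    have e1 : (Rz θ - expRz θ b) 1 1 =
        Complex.exp (((-(2 * Real.pi * φ) : ℝ):ℂ) * Complex.I +
            (r:ℂ) * ((-(2 * Real.pi * δ) : ℝ):ℂ) * Complex.I) -
          (((1 - r : ℝ) : ℂ) * Complex.exp (((-(2 * Real.pi * φ) : ℝ):ℂ) * Complex.I) +
            (r : ℂ) * Complex.exp (((-(2 * Real.pi * φ) : ℝ):ℂ) * Complex.I +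
              ((-(2 * Real.pi * δ) : ℝ):ℂ) * Complex.I)) := by
      simp only [Rz, expRz, Matrix.sub_apply, Matrix.add_apply, Matrix.smul_apply,
        Matrix.diagonal_apply_eq, smul_eq_mul, ← hr, ← hφ, ← hδ]
      simp only [Matrix.cons_val_one, Matrix.head_cons]
      congr 2
      · rw [hθ]; push_cast; ring
      · push_cast; ring
      · rw [Complex.exp_add, ← Complex.exp_add]
        congr 1
        push_cast; ring
    rw [e1]
    exact le_trans (phase_bound _ _ _ hr0 hr1) (harith _ (Or.inr rfl))


lemma diff_diagonal (θ : ℝ) (b : ℕ) :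
    Rz θ - expRz θ b = Matrix.diagonal (fun i => (Rz θ - expRz θ b) i i) := by
  ext i j
  by_cases hij : i = j
  · subst hij; simp
  · rw [Matrix.diagonal_apply_ne _ hij]
    simp only [Rz, expRz, Matrix.sub_apply, Matrix.add_apply, Matrix.smul_apply,
      Matrix.diagonal_apply_ne _ hij, smul_eq_mul]
    ring


lemma part1 (c : ℕ) (θ : Fin c → ℝ) (b : ℕ) :
    opNorm (Matrix.blockDiagonal (fun j => Rz (θ j)) -
        Matrix.blockDiagonal (fun j => expRz (θ j) b)) ≤
      Real.pi ^ 2 * (2 : ℝ) ^ (-(2 * (b : ℤ) + 1)) := by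
  have h1 : Matrix.blockDiagonal (fun j => Rz (θ j)) -
      Matrix.blockDiagonal (fun j => expRz (θ j) b) =
      Matrix.blockDiagonal (fun j => Rz (θ j) - expRz (θ j) b) :=
    (Matrix.blockDiagonal_sub _ _).symm
  have h2 : (fun j => Rz (θ j) - expRz (θ j) b) =
      fun j => Matrix.diagonal (fun i => (Rz (θ j) - expRz (θ j) b) i i) := by
    funext j; exact diff_diagonal (θ j) b
  rw [h1, h2, Matrix.blockDiagonal_diagonal]
  apply opNorm_diag_le
  · positivity
  · rintro ⟨i, j⟩
    exact entry_bound (θ j) b i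

theorem randomized_multiplexed_rotation (c : ℕ) (hc : 1 ≤ c) (θ : Fin c → ℝ) :
    (∀ b : ℕ, 1 ≤ b →
      opNorm (Matrix.blockDiagonal (fun j => Rz (θ j)) -
          Matrix.blockDiagonal (fun j => expRz (θ j) b)) ≤
        Real.pi ^ 2 * (2 : ℝ) ^ (-(2 * (b : ℤ) + 1))) ∧
    (∀ ε : ℝ, 0 < ε → ε ≤ Real.pi ^ 2 / 8 →
      opNorm (Matrix.blockDiagonal (fun j => Rz (θ j)) -
          Matrix.blockDiagonal
            (fun j => expRz (θ j) ⌈(1 / 2 : ℝ) * Real.logb 2 (Real.pi ^ 2 / (2 * ε))⌉₊)) ≤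
        ε) := by
  constructor
  · intro b _
    exact part1 c θ b
  · intro ε hε hε8
    set b : ℕ := ⌈(1 / 2 : ℝ) * Real.logb 2 (Real.pi ^ 2 / (2 * ε))⌉₊ with hb
    refine le_trans (part1 c θ b) ?_
    have hπ : (0:ℝ) < Real.pi ^ 2 := by positivity
    have hden : (0:ℝ) < 2 * ε := by linarith
    have hX : (0:ℝ) < Real.pi ^ 2 / (2 * ε) := by positivity
    have hlogle : Real.logb 2 (Real.pi ^ 2 / (2 * ε)) ≤ 2 * (b:ℝ) := by
      have := Nat.le_ceil ((1 / 2 : ℝ) * Real.logb 2 (Real.pi ^ 2 / (2 * ε)))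
      rw [← hb] at this
      linarith
    have hpow : Real.pi ^ 2 / (2 * ε) ≤ (2:ℝ) ^ (2 * b : ℕ) := by
      calc Real.pi ^ 2 / (2 * ε) = (2:ℝ) ^ (Real.logb 2 (Real.pi ^ 2 / (2 * ε))) :=
            (Real.rpow_logb two_pos (by norm_num) hX).symm
        _ ≤ (2:ℝ) ^ ((2 * b : ℕ) : ℝ) :=
            Real.rpow_le_rpow_of_exponent_le one_le_two (by push_cast; linarith)
        _ = (2:ℝ) ^ (2 * b : ℕ) := by rw [Real.rpow_natCast]
    have hzpow : (2:ℝ) ^ (-(2 * (b:ℤ) + 1)) = ((2:ℝ) ^ (2 * b : ℕ) * 2)⁻¹ := by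
      rw [show (-(2 * (b:ℤ) + 1)) = -((2 * b + 1 : ℕ) : ℤ) by push_cast; ring, zpow_neg,
        zpow_natCast, pow_succ]
    rw [hzpow]
    have hp : (0:ℝ) < (2:ℝ) ^ (2 * b : ℕ) := by positivity
    rw [mul_inv_le_iff₀ (by positivity)]
    rw [div_le_iff₀ hden] at hpow
    nlinarith
end
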